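/- arXiv:1905.05723 — 2 statements merged into one kernel-verified Lean document; each statement's English description precedes it below -/
import Mathlib

section
/- If λ and μ are partitions contained in the m×k rectangle with |λ| > |μ|, then there exists an integer p ≥ 0 such that |λ↑p| < |μ↑p|. -/
/-- Seidel shift of a partition contained in the `m × k` rectangle,
viewed as a weakly decreasing function `ℕ → ℕ` vanishing from index `m` on. -/
def seidelShift (m k : ℕ) (lam : ℕ → ℕ) : ℕ → ℕ :=
  if lam 0 < k then (fun i => if i < m then lam i + 1 else 0)
  else (fun i => lam (i + 1))

/-- `lam` is a partition contained in the `m × k` rectangle. -/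
def IsPartIn (m k : ℕ) (lam : ℕ → ℕ) : Prop :=
  (∀ i j, i ≤ j → lam j ≤ lam i) ∧ lam 0 ≤ k ∧ ∀ i, m ≤ i → lam i = 0

/-!
The β-numbers `λ i + (m - 1 - i)`, `i < m`, of a partition `λ` in the `m × k` rectangle lie in
`{0, …, n - 1}` with `n = m + k`, and a Seidel shift adds `1` to each of them modulo `n` (when
`λ 0 = k` the largest one, `n - 1`, wraps around to `0`). So `|λ↑p|` plus the constant
`∑ i < m, (m - 1 - i)` equals `∑ i < m, (β i + p) % n`, and summing over a full orbit `p < n`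
gives `m * ∑ p < n, p` whatever `λ` is. If `|λ↑p| ≥ |μ↑p|` for every `p`, strictly at `p = 0`,
the two orbit sums would differ.
-/

open Finset

theorem Finset.sum_range_add_mod {M : Type*} [AddCommMonoid M] (f : ℕ → M) (a n : ℕ) :
    ∑ p ∈ range n, f ((a + p) % n) = ∑ p ∈ range n, f p := by
  rcases n.eq_zero_or_pos with rfl | hn
  · simp
  have := NeZero.of_pos hn
  calc ∑ p ∈ range n, f ((a + p) % n)
      = ∑ i : Fin n, f (Fin.ofNat n a + i : Fin n) := by
        rw [← Fin.sum_univ_eq_sum_range]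
        simp [Fin.val_add, Nat.mod_add_mod]
    _ = ∑ i : Fin n, f i := Equiv.sum_comp (Equiv.addLeft (Fin.ofNat n a)) (fun i => f i)
    _ = ∑ p ∈ range n, f p := Fin.sum_univ_eq_sum_range f n

theorem Multiset.range_succ_eq_map (n : ℕ) :
    Multiset.range (n + 1) = 0 ::ₘ (Multiset.range n).map Nat.succ :=
  congrArg ((↑) : List ℕ → Multiset ℕ) List.range_succ_eq_map

theorem isPartIn_seidelShift {m k : ℕ} {lam : ℕ → ℕ} (h : IsPartIn m k lam) :
    IsPartIn m k (seidelShift m k lam) := by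
  obtain ⟨hdec, hbd, hvan⟩ := h
  unfold seidelShift
  split_ifs with h0
  · refine ⟨fun i j hij => ?_, ?_, fun i hi => if_neg (by omega)⟩
    · have := hdec i j hij
      dsimp only
      split_ifs <;> omega
    · dsimp only
      split_ifs <;> omega
  · exact ⟨fun i j hij => hdec _ _ (by omega), (hdec 0 1 (by omega)).trans hbd,
      fun i hi => hvan _ (by omega)⟩

theorem isPartIn_iterate_seidelShift {m k : ℕ} {lam : ℕ → ℕ} (h : IsPartIn m k lam) (p : ℕ) :
    IsPartIn m k ((seidelShift m k)^[p] lam) := by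
  induction p with
  | zero => exact h
  | succ p ih => rw [Function.iterate_succ_apply']; exact isPartIn_seidelShift ih

def betaNumbers (m : ℕ) (lam : ℕ → ℕ) : Multiset ℕ :=
  (Multiset.range m).map fun i => lam i + (m - 1 - i)

theorem card_betaNumbers (m : ℕ) (lam : ℕ → ℕ) : (betaNumbers m lam).card = m := by
  simp [betaNumbers]

theorem lt_of_mem_betaNumbers {m k x : ℕ} {lam : ℕ → ℕ} (h : IsPartIn m k lam)
    (hx : x ∈ betaNumbers m lam) : x < m + k := by
  obtain ⟨i, hi, rfl⟩ := Multiset.mem_map.1 hx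
  have := Multiset.mem_range.1 hi
  have := h.1 0 i i.zero_le
  have := h.2.1
  omega

theorem sum_betaNumbers (m : ℕ) (lam : ℕ → ℕ) :
    (betaNumbers m lam).sum = ∑ i ∈ range m, lam i + ∑ i ∈ range m, (m - 1 - i) := by
  simp [betaNumbers, Multiset.sum_map_add, Finset.sum_eq_multiset_sum]

theorem betaNumbers_seidelShift {m k : ℕ} {lam : ℕ → ℕ} (h : IsPartIn m k lam) :
    betaNumbers m (seidelShift m k lam) =
      (betaNumbers m lam).map (fun x => (x + 1) % (m + k)) := by
  obtain ⟨hdec, hbd, hvan⟩ := h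
  rw [betaNumbers, betaNumbers, Multiset.map_map]
  by_cases h0 : lam 0 < k
  · refine Multiset.map_congr rfl fun i hi => ?_
    have hi : i < m := Multiset.mem_range.1 hi
    have := hdec 0 i i.zero_le
    simp only [seidelShift, h0, hi, if_true, Function.comp_apply]
    rw [Nat.mod_eq_of_lt (by omega)]
    omega
  · obtain _ | m := m
    · rfl
    conv_lhs => rw [Multiset.range_succ]
    conv_rhs => rw [Multiset.range_succ_eq_map]
    rw [Multiset.map_cons, Multiset.map_cons, Multiset.map_map]
    congr 1
    · have hn : lam 0 + (m + 1 - 1 - 0) + 1 = m + 1 + k := by omega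
      simp only [Function.comp_apply, hn, Nat.mod_self]
      simp [seidelShift, h0, hvan (m + 1) le_rfl]
    · refine Multiset.map_congr rfl fun i hi => ?_
      have hi : i < m := Multiset.mem_range.1 hi
      have := hdec 0 (i + 1) (Nat.zero_le _)
      simp only [seidelShift, h0, if_false, Function.comp_apply, Nat.succ_eq_add_one]
      rw [Nat.mod_eq_of_lt (by omega)]
      omega

theorem betaNumbers_iterate_seidelShift {m k : ℕ} {lam : ℕ → ℕ} (h : IsPartIn m k lam) (p : ℕ) :
    betaNumbers m ((seidelShift m k)^[p] lam) =
      (betaNumbers m lam).map (fun x => (x + p) % (m + k)) := by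
  induction p with
  | zero =>
    conv_lhs => rw [Function.iterate_zero_apply, ← Multiset.map_id (betaNumbers m lam)]
    exact Multiset.map_congr rfl fun x hx => (Nat.mod_eq_of_lt (lt_of_mem_betaNumbers h hx)).symm
  | succ p ih =>
    rw [Function.iterate_succ_apply', betaNumbers_seidelShift (isPartIn_iterate_seidelShift h p),
      ih, Multiset.map_map]
    refine Multiset.map_congr rfl fun x _ => ?_
    simp [Nat.mod_add_mod, Nat.add_assoc]

theorem sum_sum_betaNumbers_iterate_seidelShift {m k : ℕ} {lam : ℕ → ℕ} (h : IsPartIn m k lam) :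
    ∑ p ∈ range (m + k), (betaNumbers m ((seidelShift m k)^[p] lam)).sum =
      m * ∑ p ∈ range (m + k), p := by
  calc ∑ p ∈ range (m + k), (betaNumbers m ((seidelShift m k)^[p] lam)).sum
      = ((betaNumbers m lam).map fun x => ∑ p ∈ range (m + k), (x + p) % (m + k)).sum := by
        simp_rw [betaNumbers_iterate_seidelShift h]
        exact (Multiset.sum_map_sum_map _ _).symm
    _ = ((betaNumbers m lam).map fun _ => ∑ p ∈ range (m + k), p).sum := by
        congr 1
        exact Multiset.map_congr rfl fun x _ => sum_range_add_mod id x (m + k)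
    _ = m * ∑ p ∈ range (m + k), p := by simp [card_betaNumbers]

theorem seidel_shift_reverses_weight_general (m k : ℕ)
    (lam mu : ℕ → ℕ) (hlam : IsPartIn m k lam) (hmu : IsPartIn m k mu)
    (hgt : ∑ i ∈ Finset.range m, mu i < ∑ i ∈ Finset.range m, lam i) :
    ∃ p : ℕ, ∑ i ∈ Finset.range m, (seidelShift m k)^[p] lam i
      < ∑ i ∈ Finset.range m, (seidelShift m k)^[p] mu i := by
  by_contra! hle
  have hm : 0 < m := Nat.pos_of_ne_zero (by rintro rfl; simp at hgt)
  have hlt : ∑ p ∈ range (m + k), (betaNumbers m ((seidelShift m k)^[p] mu)).sum <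
      ∑ p ∈ range (m + k), (betaNumbers m ((seidelShift m k)^[p] lam)).sum := by
    refine Finset.sum_lt_sum (fun p _ => ?_) ⟨0, mem_range.2 (by omega), ?_⟩
    · simpa only [sum_betaNumbers] using Nat.add_le_add_right (hle p) _
    · simpa only [sum_betaNumbers, Function.iterate_zero_apply] using
        Nat.add_lt_add_right hgt _
  rw [sum_sum_betaNumbers_iterate_seidelShift hmu, sum_sum_betaNumbers_iterate_seidelShift hlam] at hlt
  exact lt_irrefl _ hlt

/-- If `|λ| > |μ|` for partitions `λ, μ ⊆ m × k`, then some Seidel shift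
reverses the inequality: `|λ↑p| < |μ↑p|`. -/
theorem seidel_shift_reverses_weight (m k : ℕ) (hm : 0 < m) (hk : 0 < k)
    (lam mu : ℕ → ℕ) (hlam : IsPartIn m k lam) (hmu : IsPartIn m k mu)
    (hgt : ∑ i ∈ Finset.range m, mu i < ∑ i ∈ Finset.range m, lam i) :
    ∃ p : ℕ, ∑ i ∈ Finset.range m, (seidelShift m k)^[p] lam i
      < ∑ i ∈ Finset.range m, (seidelShift m k)^[p] mu i :=
  seidel_shift_reverses_weight_general m k lam mu hlam hmu hgt
end

section
/- In the ring S = ℚ[c₁,...,c_m], the element σ_n (with n = m+k) is a non-zero divisor in the quotient ring S/⟨σ_{k+1}, ..., σ_{n-1}⟩. -/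
/-- The sequence `c = (c_1, …, c_m, 0, 0, …)` of variables of `S = ℚ[c_1, …, c_m]`,
with `c_0 = 1` and `c_i = 0` for `i < 0` or `i > m`. -/
noncomputable def cVar (m : ℕ) : ℤ → MvPolynomial (Fin m) ℚ := fun i =>
  if h : 1 ≤ i ∧ i ≤ (m : ℤ) then MvPolynomial.X ⟨(i - 1).toNat, by omega⟩
  else if i = 0 then 1 else 0

/-- `σ_p = Δ_{(1^p)}(c) = det(c_{1+j-i})_{p×p}`, extended by `σ_p = 0` for `p < 0`. -/
noncomputable def sigmaP (m : ℕ) : ℤ → MvPolynomial (Fin m) ℚ := fun p =>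
  if p < 0 then 0
  else Matrix.det (Matrix.of fun i j : Fin p.toNat => cVar m (1 + (j : ℤ) - (i : ℤ)))

/-- `σ_λ = Δ_λ(σ) = det(σ_{λ_i+j-i})`. -/
noncomputable def sigmaL (m : ℕ) {l : ℕ} (lam : Fin l → ℕ) : MvPolynomial (Fin m) ℚ :=
  Matrix.det (Matrix.of fun i j : Fin l => sigmaP m ((lam i : ℤ) + (j : ℤ) - (i : ℤ)))

/-!
Write `I = ⟨σ_{k+1}, …, σ_{m+k-1}⟩`. We show, by induction on `m + k`, that
`σ_{k+1}, …, σ_{k+m}` is a weakly regular sequence in `ℚ[c_1, …, c_m]`.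

Setting `c_m = 0` sends each `σ_p` to the `σ_p` of `ℚ[c_1, …, c_{m-1}]`, so by induction
`c_m, σ_{k+1}, …, σ_{k+m-1}` is weakly regular; since everything is homogeneous for `deg c_i = i`,
`c_m` may be moved to the end, i.e. `c_m` is a non-zero divisor modulo `I`. The identity
`∑ (-1)^i c_i σ_{n-i} = 0` gives `σ_{m+k} ≡ ±c_m σ_k` modulo `I`. Finally `c_i ↦ σ_i` induces an
isomorphism `S/I ≅ ℚ[c_1, …, c_k]/⟨σ_{m+1}, …, σ_{m+k-1}⟩` sending `σ_k` to `c_k` (Jacobi–Trudi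
duality), and `c_k` is a non-zero divisor there by the previous step with `m` and `k` exchanged.
-/

open scoped nonZeroDivisors

open Ideal.Quotient in
theorem Ideal.Quotient.mk_mem_nonZeroDivisors_iff {R : Type*} [CommRing R] {I : Ideal R}
    {a : R} : mk I a ∈ (R ⧸ I)⁰ ↔ ∀ x, x * a ∈ I → x ∈ I := by
  simp only [mem_nonZeroDivisors_iff_right, mk_surjective.forall, ← map_mul, eq_zero_iff_mem]

section WeaklyRegular

variable {R R' : Type*} [CommRing R] [CommRing R']

open Ideal Ideal.Quotient

/-- The ideal-theoretic form of `RingTheory.Sequence.IsWeaklyRegular (R ⧸ I) l`. -/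
def IsWeaklyRegularModulo : Ideal R → List R → Prop
  | _, [] => True
  | I, a :: l => mk I a ∈ (R ⧸ I)⁰ ∧ IsWeaklyRegularModulo (I ⊔ span {a}) l

theorem isWeaklyRegularModulo_append (I : Ideal R) (l₁ l₂ : List R) :
    IsWeaklyRegularModulo I (l₁ ++ l₂) ↔
      IsWeaklyRegularModulo I l₁ ∧ IsWeaklyRegularModulo (I ⊔ ofList l₁) l₂ := by
  induction l₁ generalizing I with
  | nil => simp [IsWeaklyRegularModulo]
  | cons a l ih =>
    simp only [List.cons_append, IsWeaklyRegularModulo, ih, and_assoc, ofList_cons, sup_assoc]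

theorem mem_sup_ker_iff_mem_map {F : Type*} [FunLike F R R'] [RingHomClass F R R'] {π : F}
    (hπ : Function.Surjective π) (I : Ideal R) (x : R) :
    x ∈ I ⊔ RingHom.ker π ↔ π x ∈ I.map π := by
  rw [RingHom.ker_eq_comap_bot, ← comap_map_of_surjective π hπ, mem_comap]

theorem isWeaklyRegularModulo_sup_ker_iff {F : Type*} [FunLike F R R'] [RingHomClass F R R']
    {π : F} (hπ : Function.Surjective π) (I : Ideal R) (l : List R) :
    IsWeaklyRegularModulo (I ⊔ RingHom.ker π) l ↔ IsWeaklyRegularModulo (I.map π) (l.map π) := by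
  induction l generalizing I with
  | nil => exact Iff.rfl
  | cons a l ih =>
    have hnzd : mk (I ⊔ RingHom.ker π) a ∈ (R ⧸ (I ⊔ RingHom.ker π))⁰ ↔
        mk (I.map π) (π a) ∈ (R' ⧸ I.map π)⁰ := by
      simp only [mk_mem_nonZeroDivisors_iff, hπ.forall, ← map_mul, mem_sup_ker_iff_mem_map hπ]
    have hsup : I.map π ⊔ span {π a} = (I ⊔ span {a}).map π := by
      rw [Ideal.map_sup, map_span, Set.image_singleton]
    rw [List.map_cons, IsWeaklyRegularModulo, IsWeaklyRegularModulo, hnzd, hsup, ← ih,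
      sup_right_comm]

theorem mk_mem_nonZeroDivisors_sup_span_swap {I : Ideal R} {a b : R}
    (ha : mk I a ∈ (R ⧸ I)⁰) (hb : mk (I ⊔ span {a}) b ∈ (R ⧸ (I ⊔ span {a}))⁰) :
    mk (I ⊔ span {b}) a ∈ (R ⧸ (I ⊔ span {b}))⁰ := by
  rw [mk_mem_nonZeroDivisors_iff] at ha hb ⊢
  simp only [sup_comm I, mem_span_singleton_sup] at hb ⊢
  rintro x ⟨y, z, hz, hxy⟩
  obtain ⟨u, v, hv, rfl⟩ := hb y ⟨x, -z, neg_mem hz, by linear_combination -hxy⟩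
  refine ⟨u, x - u * b, ha _ ?_, by ring⟩
  convert add_mem (I.mul_mem_right b hv) hz using 1
  linear_combination -hxy

end WeaklyRegular

section Graded

variable {A σ : Type*} [CommRing A] [SetLike σ A] [AddSubgroupClass σ A] {𝒜 : ℕ → σ}
  [GradedRing 𝒜] {I : Ideal A}

open Ideal Ideal.Quotient DirectSum

theorem Ideal.IsHomogeneous.mk_mem_nonZeroDivisors_iff (hI : I.IsHomogeneous 𝒜) {b : A} {j : ℕ}
    (hb : b ∈ 𝒜 j) : mk I b ∈ (A ⧸ I)⁰ ↔ ∀ i, ∀ x ∈ 𝒜 i, x * b ∈ I → x ∈ I := by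
  refine Ideal.Quotient.mk_mem_nonZeroDivisors_iff.trans ⟨fun h i x _ => h x, fun h x hx => ?_⟩
  rw [hI.mem_iff]
  intro i
  refine h i _ (SetLike.coe_mem _) ?_
  rw [← Nat.add_sub_cancel i j, ← coe_decompose_mul_of_right_mem_of_le 𝒜 hb (by omega)]
  exact hI.mem_iff.mp hx _

theorem Ideal.IsHomogeneous.mk_mem_nonZeroDivisors_of_sup_span (hI : I.IsHomogeneous 𝒜)
    {a b : A} {i j : ℕ} (ha : a ∈ 𝒜 i) (hi : 0 < i) (hb : b ∈ 𝒜 j)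
    (ha' : mk I a ∈ (A ⧸ I)⁰) (hb' : mk (I ⊔ span {a}) b ∈ (A ⧸ (I ⊔ span {a}))⁰) :
    mk I b ∈ (A ⧸ I)⁰ := by
  rw [hI.mk_mem_nonZeroDivisors_iff hb]
  rw [Ideal.Quotient.mk_mem_nonZeroDivisors_iff] at ha' hb'
  intro d
  induction d using Nat.strong_induction_on with
  | _ d ih =>
  intro x hx hxb
  obtain ⟨y, z, hz, rfl⟩ := mem_span_singleton_sup.mp
    (sup_comm I _ ▸ hb' x (mem_sup_left hxb))
  have hzd : (decompose 𝒜 z d : A) ∈ I := hI.mem_iff.mp hz d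
  have hx' : y * a + z = decompose 𝒜 (y * a) d + decompose 𝒜 z d := by
    rw [← decompose_of_mem_same 𝒜 hx, decompose_add, DirectSum.add_apply, AddMemClass.coe_add]
  rcases lt_or_ge d i with hdi | hid
  · rw [hx', coe_decompose_mul_of_right_mem_of_not_le 𝒜 ha (by omega), zero_add]
    exact hzd
  rw [hx', coe_decompose_mul_of_right_mem_of_le 𝒜 ha hid] at hxb ⊢
  set y' := (decompose 𝒜 y (d - i) : A)
  have hy' : y' ∈ I := by
    refine ih (d - i) (by omega) y' (SetLike.coe_mem _) (ha' _ ?_)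
    convert sub_mem hxb (I.mul_mem_right b hzd) using 1
    ring
  exact add_mem (I.mul_mem_right a hy') hzd

theorem Ideal.IsHomogeneous.isWeaklyRegularModulo_concat_of_cons (hI : I.IsHomogeneous 𝒜)
    {a : A} {i : ℕ} (ha : a ∈ 𝒜 i) (hi : 0 < i) {l : List A}
    (hl : ∀ b ∈ l, SetLike.IsHomogeneousElem 𝒜 b) (h : IsWeaklyRegularModulo I (a :: l)) :
    IsWeaklyRegularModulo I (l ++ [a]) := by
  induction l generalizing I with
  | nil => exact h
  | cons b l ih =>
    obtain ⟨ha', hb', hl'⟩ := h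
    obtain ⟨j, hb⟩ := hl b List.mem_cons_self
    have hIb : (I ⊔ span {b}).IsHomogeneous 𝒜 :=
      hI.sup (homogeneous_span 𝒜 _ (by simpa using ⟨j, hb⟩))
    refine ⟨hI.mk_mem_nonZeroDivisors_of_sup_span ha hi hb ha' hb', ih hIb
      (fun c hc => hl c (List.mem_cons_of_mem b hc)) ⟨?_, ?_⟩⟩
    · exact mk_mem_nonZeroDivisors_sup_span_swap ha' hb'
    · rwa [sup_right_comm]

end Graded

section Toeplitz

variable {R : Type*} [CommRing R] {a : ℤ → R}

open Matrix Finset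

def shiftedToeplitzDet (a : ℤ → R) (s : ℤ) (p : ℕ) : R :=
  det (of fun i j : Fin p => if (i : ℕ) = 0 then a (s + j) else a (1 + j - i))

def toeplitzDet (a : ℤ → R) (p : ℕ) : R :=
  det (of fun i j : Fin p => a (1 + j - i))

theorem shiftedToeplitzDet_one (a : ℤ → R) (p : ℕ) :
    shiftedToeplitzDet a 1 p = toeplitzDet a p := by
  unfold shiftedToeplitzDet toeplitzDet
  congr 1
  ext i j
  simp only [of_apply]
  split_ifs with h <;> simp [h]

/-- Expansion along the first column, whose only nonzero entries are `a s` and `a 0 = 1`. -/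
theorem shiftedToeplitzDet_add_two (ha0 : a 0 = 1) (ha : ∀ t < 0, a t = 0) (s : ℤ) (p : ℕ) :
    shiftedToeplitzDet a s (p + 2) =
      a s * shiftedToeplitzDet a 1 (p + 1) - shiftedToeplitzDet a (s + 1) (p + 1) := by
  set M : Matrix (Fin (p + 2)) (Fin (p + 2)) R :=
    of fun i j => if (i : ℕ) = 0 then a (s + j) else a (1 + j - i)
  have hM0 : M.submatrix (Fin.succAbove 0) Fin.succ =
      of fun i j : Fin (p + 1) => if (i : ℕ) = 0 then a (1 + j) else a (1 + j - i) := by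
    ext i j
    simp only [M, submatrix_apply, of_apply, Fin.succAbove_zero, Fin.val_succ,
      Nat.add_one_ne_zero, if_false]
    split_ifs with h
    · simp [h, add_comm]
    · push_cast; ring_nf
  have hM1 : M.submatrix (Fin.succAbove 1) Fin.succ =
      of fun i j : Fin (p + 1) => if (i : ℕ) = 0 then a (s + 1 + j) else a (1 + j - i) := by
    ext i j
    rcases Fin.eq_zero_or_eq_succ i with rfl | ⟨i, rfl⟩ <;>
      simp only [M, submatrix_apply, of_apply, Fin.succAbove_ne_zero_zero one_ne_zero,
        Fin.one_succAbove_succ, Fin.val_zero, Fin.val_succ, if_true,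
        Nat.add_one_ne_zero, if_false] <;> push_cast <;> ring_nf
  have hcol (i : Fin p) : M i.succ.succ 0 = 0 := by
    simp only [M, of_apply, Fin.val_succ, Fin.val_zero]
    rw [if_neg (by omega), ha _ (by push_cast; omega)]
  change M.det = _
  rw [det_succ_column_zero, Fin.sum_univ_succ, Fin.sum_univ_succ,
    Finset.sum_eq_zero fun i _ => by rw [hcol, mul_zero, zero_mul], Fin.succ_zero_eq_one, hM0, hM1]
  simp only [M, shiftedToeplitzDet, of_apply, Fin.val_zero, Fin.val_one, pow_zero, pow_one,
    if_true, one_ne_zero, if_false, Nat.cast_zero, Nat.cast_one, add_zero, sub_self, ha0]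
  ring

theorem shiftedToeplitzDet_succ (ha0 : a 0 = 1) (ha : ∀ t < 0, a t = 0) (p : ℕ) (s : ℤ) :
    shiftedToeplitzDet a s (p + 1) =
      ∑ x ∈ antidiagonal p, (-1) ^ x.1 * a (s + x.1) * toeplitzDet a x.2 := by
  induction p generalizing s with
  | zero => simp [shiftedToeplitzDet, toeplitzDet]
  | succ p ih =>
    rw [shiftedToeplitzDet_add_two ha0 ha, shiftedToeplitzDet_one, ih (s + 1),
      Nat.sum_antidiagonal_succ, sub_eq_add_neg, ← sum_neg_distrib]
    congr 1
    · simp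
    · refine sum_congr rfl fun x _ => ?_
      push_cast
      ring_nf

theorem sum_antidiagonal_toeplitzDet (ha0 : a 0 = 1) (ha : ∀ t < 0, a t = 0) (n : ℕ) :
    ∑ x ∈ antidiagonal (n + 1), (-1) ^ x.1 * a x.1 * toeplitzDet a x.2 = 0 := by
  rw [Nat.sum_antidiagonal_succ, ← shiftedToeplitzDet_one, shiftedToeplitzDet_succ ha0 ha]
  simp only [pow_zero, Nat.cast_zero, ha0, one_mul]
  rw [← sum_add_distrib]
  refine sum_eq_zero fun x _ => ?_
  push_cast
  ring_nf

theorem toeplitzDet_eq_of_sum_antidiagonal (ha0 : a 0 = 1) (ha : ∀ t < 0, a t = 0) {b : ℕ → R}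
    (hb0 : b 0 = 1) (hb : ∀ n : ℕ, ∑ x ∈ antidiagonal (n + 1), (-1) ^ x.1 * a x.1 * b x.2 = 0)
    (p : ℕ) : toeplitzDet a p = b p := by
  induction p using Nat.strong_induction_on with
  | _ p ih =>
  rcases p with _ | n
  · rw [hb0]; exact det_fin_zero
  have hT := sum_antidiagonal_toeplitzDet ha0 ha n
  have hb := hb n
  rw [Nat.sum_antidiagonal_succ] at hT hb
  have htail : ∑ x ∈ antidiagonal n, (-1) ^ (x.1 + 1) * a ↑(x.1 + 1) * toeplitzDet a x.2 =
      ∑ x ∈ antidiagonal n, (-1) ^ (x.1 + 1) * a ↑(x.1 + 1) * b x.2 :=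
    sum_congr rfl fun x hx => by rw [ih x.2 (by have := mem_antidiagonal.mp hx; omega)]
  simp only [pow_zero, one_mul, Nat.cast_zero, ha0] at hT hb
  linear_combination hT - hb - htail

theorem sum_antidiagonal_neg_one_pow_mul_comm (f g : ℕ → R) (n : ℕ) :
    ∑ x ∈ antidiagonal n, (-1) ^ x.1 * f x.1 * g x.2 =
      (-1) ^ n * ∑ x ∈ antidiagonal n, (-1) ^ x.1 * g x.1 * f x.2 := by
  rw [← Nat.sum_antidiagonal_swap, mul_sum]
  refine sum_congr rfl fun x hx => ?_
  rw [← mem_antidiagonal.mp hx, Prod.fst_swap, Prod.snd_swap, pow_add]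
  have hsq : (-1 : R) ^ x.1 * (-1) ^ x.1 = 1 := by rw [← mul_pow, neg_one_mul, neg_neg, one_pow]
  linear_combination -(-1) ^ x.2 * f x.2 * g x.1 * hsq

theorem map_toeplitzDet {R' F : Type*} [CommRing R'] [FunLike F R R'] [RingHomClass F R R']
    (f : F) {b : ℤ → R'} {p : ℕ}
    (h : ∀ t ≤ (p : ℤ), f (a t) = b t) : f (toeplitzDet a p) = toeplitzDet b p := by
  rw [toeplitzDet, ← RingHom.coe_coe, RingHom.map_det]
  congr 1
  ext i j
  exact h _ (by have := j.isLt; omega)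

end Toeplitz

section DropLastVar

open MvPolynomial

variable (R : Type*) [CommRing R] (n : ℕ)

noncomputable def dropLastVar : MvPolynomial (Fin (n + 1)) R →ₐ[R] MvPolynomial (Fin n) R :=
  aeval (Fin.lastCases 0 X)

@[simp]
theorem dropLastVar_X_castSucc (i : Fin n) : dropLastVar R n (X i.castSucc) = X i := by
  simp [dropLastVar]

@[simp]
theorem dropLastVar_X_last : dropLastVar R n (X (Fin.last n)) = 0 := by
  simp [dropLastVar]

theorem dropLastVar_comp_rename_castSucc :
    (dropLastVar R n).comp (rename Fin.castSucc) = AlgHom.id R _ :=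
  algHom_ext fun i => by simp

theorem dropLastVar_surjective : Function.Surjective (dropLastVar R n) := fun p =>
  ⟨rename Fin.castSucc p, AlgHom.congr_fun (dropLastVar_comp_rename_castSucc R n) p⟩

theorem ker_dropLastVar : RingHom.ker (dropLastVar R n) = Ideal.span {X (Fin.last n)} := by
  set J := Ideal.span {(X (Fin.last n) : MvPolynomial (Fin (n + 1)) R)}
  refine le_antisymm (fun p hp => ?_) (by simp [J, Ideal.span_le])
  have key : ((Ideal.Quotient.mkₐ R J).comp (rename Fin.castSucc)).comp (dropLastVar R n) =
      Ideal.Quotient.mkₐ R J := by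
    refine algHom_ext fun i => Fin.lastCases ?_ (fun i => ?_) i
    · simp [J]
    · simp
  rw [← Ideal.Quotient.eq_zero_iff_mem, ← Ideal.Quotient.mkₐ_eq_mk R, ← key]
  simp [RingHom.mem_ker.mp hp]

end DropLastVar

section SigmaPolynomials

open MvPolynomial Finset

variable (m : ℕ)

theorem cVar_zero : cVar m 0 = 1 := by simp [cVar]

variable {m} in
theorem cVar_of_neg {t : ℤ} (ht : t < 0) : cVar m t = 0 := by
  rw [cVar, dif_neg (by omega), if_neg (by omega)]

variable {m} in
theorem cVar_of_lt {t : ℤ} (ht : (m : ℤ) < t) : cVar m t = 0 := by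
  rw [cVar, dif_neg (by omega), if_neg (by omega)]

variable {m} in
theorem exists_fin_natCast_succ_eq {t : ℤ} (h₀ : 0 < t) (h₁ : t ≤ m) :
    ∃ i : Fin m, (((i : ℕ) + 1 : ℕ) : ℤ) = t :=
  ⟨⟨t.toNat - 1, by omega⟩, by simp; omega⟩

theorem cVar_natCast_succ (i : Fin m) : cVar m ((i : ℕ) + 1 : ℕ) = X i := by
  rw [cVar, dif_pos (by omega)]
  congr
  omega

theorem sigmaP_zero : sigmaP m 0 = 1 := by simp [sigmaP]

variable {m} in
theorem sigmaP_of_neg {t : ℤ} (ht : t < 0) : sigmaP m t = 0 := by simp [sigmaP, ht]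

theorem sigmaP_natCast (p : ℕ) : sigmaP m p = toeplitzDet (cVar m) p := by
  rw [sigmaP, if_neg (by omega), Int.toNat_natCast, toeplitzDet]

theorem sum_antidiagonal_cVar_sigmaP (n : ℕ) :
    ∑ x ∈ antidiagonal (n + 1), (-1) ^ x.1 * cVar m x.1 * sigmaP m x.2 = 0 := by
  simp only [sigmaP_natCast]
  exact sum_antidiagonal_toeplitzDet (cVar_zero m) (fun _ => cVar_of_neg) n

theorem toeplitzDet_sigmaP (p : ℕ) : toeplitzDet (sigmaP m) p = cVar m p := by
  refine toeplitzDet_eq_of_sum_antidiagonal (b := fun p : ℕ => cVar m p) (sigmaP_zero m)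
    (fun _ => sigmaP_of_neg) (cVar_zero m) (fun n => ?_) p
  rw [sum_antidiagonal_neg_one_pow_mul_comm (fun i : ℕ => sigmaP m i) (fun i : ℕ => cVar m i),
    sum_antidiagonal_cVar_sigmaP, mul_zero]

/-- The grading with `deg c_i = i`. -/
def cWeight : Fin m → ℕ := fun i => i + 1

attribute [local instance] weightedGradedAlgebra

theorem cVar_mem_weightedHomogeneousSubmodule (t : ℕ) :
    cVar m t ∈ weightedHomogeneousSubmodule ℚ (cWeight m) t := by
  rw [mem_weightedHomogeneousSubmodule]
  rcases Nat.eq_zero_or_pos t with rfl | ht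
  · rw [Nat.cast_zero, cVar_zero]
    exact isWeightedHomogeneous_one ℚ _
  rcases le_or_gt t m with htm | htm
  · obtain ⟨i, rfl⟩ : ∃ i : Fin m, (i : ℕ) + 1 = t := ⟨⟨t - 1, by omega⟩, by simp; omega⟩
    rw [cVar_natCast_succ]
    exact isWeightedHomogeneous_X ℚ _ i
  · rw [cVar_of_lt (by omega)]
    exact isWeightedHomogeneous_zero ℚ _ _

theorem sigmaP_mem_weightedHomogeneousSubmodule (p : ℕ) :
    sigmaP m p ∈ weightedHomogeneousSubmodule ℚ (cWeight m) p := by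
  induction p using Nat.strong_induction_on with
  | _ p ih =>
  rcases p with _ | n
  · rw [Nat.cast_zero, sigmaP_zero]
    exact SetLike.GradedOne.one_mem
  have h := sum_antidiagonal_cVar_sigmaP m n
  rw [Nat.sum_antidiagonal_succ, pow_zero, one_mul, Nat.cast_zero, cVar_zero, one_mul,
    add_eq_zero_iff_eq_neg] at h
  rw [h]
  refine neg_mem (sum_mem fun x hx => ?_)
  have hmul := SetLike.mul_mem_graded (cVar_mem_weightedHomogeneousSubmodule m (x.1 + 1))
    (ih x.2 (by have := mem_antidiagonal.mp hx; omega))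
  rw [show x.1 + 1 + x.2 = n + 1 by have := mem_antidiagonal.mp hx; omega] at hmul
  rcases neg_one_pow_eq_or (MvPolynomial (Fin m) ℚ) (x.1 + 1) with hs | hs <;>
    simp only [hs, one_mul, neg_mul, neg_mem_iff, hmul]

theorem dropLastVar_cVar (t : ℤ) : dropLastVar ℚ m (cVar (m + 1) t) = cVar m t := by
  rcases lt_trichotomy t 0 with ht | rfl | ht
  · rw [cVar_of_neg ht, cVar_of_neg ht, map_zero]
  · rw [cVar_zero, cVar_zero, map_one]
  rcases le_or_gt t m with htm | hmt
  · obtain ⟨i, rfl⟩ := exists_fin_natCast_succ_eq ht htm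
    rw [cVar_natCast_succ m i, show (i : ℕ) + 1 = (i.castSucc : ℕ) + 1 from rfl,
      cVar_natCast_succ, dropLastVar_X_castSucc]
  rw [cVar_of_lt hmt]
  rcases eq_or_lt_of_le (show (m : ℤ) + 1 ≤ t by omega) with rfl | hmt'
  · rw [show (m : ℤ) + 1 = (((Fin.last m : ℕ) + 1 : ℕ) : ℤ) by simp, cVar_natCast_succ,
      dropLastVar_X_last]
  · rw [cVar_of_lt (by push_cast; omega), map_zero]

theorem dropLastVar_sigmaP (p : ℤ) : dropLastVar ℚ m (sigmaP (m + 1) p) = sigmaP m p := by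
  rcases lt_or_ge p 0 with hp | hp
  · rw [sigmaP_of_neg hp, sigmaP_of_neg hp, map_zero]
  obtain ⟨p, rfl⟩ := Int.eq_ofNat_of_zero_le hp
  rw [sigmaP_natCast, sigmaP_natCast]
  exact map_toeplitzDet _ fun t _ => dropLastVar_cVar m t

end SigmaPolynomials

section Duality

open MvPolynomial Ideal.Quotient

noncomputable def sigmaIdeal (m k : ℕ) : Ideal (MvPolynomial (Fin m) ℚ) :=
  Ideal.span (sigmaP m '' Set.Icc ((k : ℤ) + 1) ((m : ℤ) + k - 1))

theorem sigmaP_mem_sigmaIdeal {m k : ℕ} {p : ℤ} (h₁ : (k : ℤ) + 1 ≤ p)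
    (h₂ : p ≤ (m : ℤ) + k - 1) : sigmaP m p ∈ sigmaIdeal m k :=
  Ideal.subset_span ⟨p, ⟨h₁, h₂⟩, rfl⟩

noncomputable def dualityHom (m k : ℕ) :
    MvPolynomial (Fin m) ℚ →ₐ[ℚ] MvPolynomial (Fin k) ℚ ⧸ sigmaIdeal k m :=
  aeval fun i => mk _ (sigmaP k (((i : ℕ) + 1 : ℕ) : ℤ))

variable {m k : ℕ}

theorem dualityHom_cVar {t : ℤ} (ht : t ≤ (m : ℤ) + k - 1) :
    dualityHom m k (cVar m t) = mk _ (sigmaP k t) := by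
  rcases lt_trichotomy t 0 with ht0 | rfl | ht0
  · rw [cVar_of_neg ht0, sigmaP_of_neg ht0, map_zero, map_zero]
  · rw [cVar_zero, sigmaP_zero, map_one, map_one]
  rcases le_or_gt t m with htm | hmt
  · obtain ⟨i, rfl⟩ := exists_fin_natCast_succ_eq ht0 htm
    rw [cVar_natCast_succ, dualityHom, aeval_X]
  · rw [cVar_of_lt hmt, map_zero, eq_comm, eq_zero_iff_mem]
    exact sigmaP_mem_sigmaIdeal (by omega) (by omega)

theorem dualityHom_sigmaP {p : ℕ} (hp : (p : ℤ) ≤ (m : ℤ) + k - 1) :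
    dualityHom m k (sigmaP m p) = mk _ (cVar k p) := by
  rw [sigmaP_natCast, map_toeplitzDet _ fun t ht => dualityHom_cVar (by omega),
    ← toeplitzDet_sigmaP, map_toeplitzDet (mk _) fun _ _ => rfl]

theorem sigmaIdeal_le_ker_dualityHom : sigmaIdeal m k ≤ RingHom.ker (dualityHom m k) := by
  rw [sigmaIdeal, Ideal.span_le]
  rintro _ ⟨p, ⟨hp₁, hp₂⟩, rfl⟩
  obtain ⟨p, rfl⟩ := Int.eq_ofNat_of_zero_le (by omega : 0 ≤ p)
  rw [SetLike.mem_coe, RingHom.mem_ker, dualityHom_sigmaP hp₂, cVar_of_lt (by omega), map_zero]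

variable (m k) in
noncomputable def dualityQuotHom :
    MvPolynomial (Fin m) ℚ ⧸ sigmaIdeal m k →ₐ[ℚ] MvPolynomial (Fin k) ℚ ⧸ sigmaIdeal k m :=
  Ideal.Quotient.liftₐ _ (dualityHom m k) fun _ ha => sigmaIdeal_le_ker_dualityHom ha

theorem dualityQuotHom_mk (x : MvPolynomial (Fin m) ℚ) :
    dualityQuotHom m k (mk _ x) = dualityHom m k x :=
  rfl

theorem dualityQuotHom_comp_dualityQuotHom (hk : 0 < k) :
    (dualityQuotHom k m).comp (dualityQuotHom m k) = AlgHom.id ℚ _ := by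
  refine Ideal.Quotient.algHom_ext ℚ (algHom_ext fun i => ?_)
  simp only [AlgHom.comp_apply, mkₐ_eq_mk, AlgHom.id_apply, dualityQuotHom_mk]
  rw [dualityHom, aeval_X, dualityQuotHom_mk, dualityHom_sigmaP (by omega), cVar_natCast_succ]

theorem mk_sigmaP_mem_nonZeroDivisors_of_dual
    (h : mk (sigmaIdeal (k + 1) (m + 1)) (X (Fin.last k)) ∈ (_ ⧸ sigmaIdeal (k + 1) (m + 1))⁰) :
    mk (sigmaIdeal (m + 1) (k + 1)) (sigmaP (m + 1) (k + 1 : ℕ)) ∈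
      (_ ⧸ sigmaIdeal (m + 1) (k + 1))⁰ := by
  have hinj : Function.Injective (dualityQuotHom (m + 1) (k + 1)) :=
    Function.LeftInverse.injective (g := dualityQuotHom (k + 1) (m + 1))
      (AlgHom.congr_fun (dualityQuotHom_comp_dualityQuotHom k.succ_pos))
  refine mem_nonZeroDivisors_of_injective hinj ?_
  rwa [dualityQuotHom_mk, dualityHom_sigmaP (by push_cast; omega),
    show ((k + 1 : ℕ) : ℤ) = (((Fin.last k : ℕ) + 1 : ℕ) : ℤ) from rfl, cVar_natCast_succ]

end Duality

section Regularity

open MvPolynomial Ideal.Quotient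

noncomputable def sigmaList (m k r : ℕ) : List (MvPolynomial (Fin m) ℚ) :=
  (List.range r).map fun j : ℕ => sigmaP m ((k : ℤ) + 1 + j)

theorem sigmaList_succ (m k r : ℕ) :
    sigmaList m k (r + 1) = sigmaList m k r ++ [sigmaP m ((k : ℤ) + 1 + r)] := by
  simp [sigmaList, List.range_succ]

theorem sigmaIdeal_eq_ofList (m k : ℕ) :
    sigmaIdeal (m + 1) k = Ideal.ofList (sigmaList (m + 1) k m) := by
  rw [sigmaIdeal, Ideal.ofList]
  congr 1
  ext x
  simp only [sigmaList, List.mem_map, List.mem_range, Set.mem_image, Set.mem_Icc, Set.mem_ofPred_eq]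
  constructor
  · rintro ⟨p, ⟨hp₁, hp₂⟩, rfl⟩
    exact ⟨(p - k - 1).toNat, by omega, by congr 1; omega⟩
  · rintro ⟨j, hj, rfl⟩
    exact ⟨_, ⟨by omega, by push_cast; omega⟩, rfl⟩

attribute [local instance] weightedGradedAlgebra

theorem isWeaklyRegularModulo_sigmaList_succ {m k : ℕ}
    (h : IsWeaklyRegularModulo ⊥ (sigmaList m k m)) :
    IsWeaklyRegularModulo ⊥ (sigmaList (m + 1) k m) ∧
      mk (sigmaIdeal (m + 1) k) (X (Fin.last m)) ∈ (_ ⧸ sigmaIdeal (m + 1) k)⁰ := by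
  have hX : mk (⊥ : Ideal (MvPolynomial (Fin (m + 1)) ℚ)) (X (Fin.last m)) ∈ (_ ⧸ ⊥)⁰ :=
    mk_mem_nonZeroDivisors_iff.mpr fun x hx => by simpa [X_ne_zero] using hx
  have hreg : IsWeaklyRegularModulo ⊥ (X (Fin.last m) :: sigmaList (m + 1) k m) := by
    refine ⟨hX, ?_⟩
    rw [bot_sup_eq, ← ker_dropLastVar, ← bot_sup_eq (a := RingHom.ker _),
      isWeaklyRegularModulo_sup_ker_iff (dropLastVar_surjective ℚ m), Ideal.map_bot]
    convert h using 1
    simp [sigmaList, dropLastVar_sigmaP]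
  have hhom : ∀ b ∈ sigmaList (m + 1) k m,
      SetLike.IsHomogeneousElem (weightedHomogeneousSubmodule ℚ (cWeight (m + 1))) b := by
    simp only [sigmaList, List.mem_map]
    rintro _ ⟨j, -, rfl⟩
    exact ⟨k + 1 + j, by exact_mod_cast sigmaP_mem_weightedHomogeneousSubmodule (m + 1) (k + 1 + j)⟩
  have hXmem : X (Fin.last m) ∈ weightedHomogeneousSubmodule ℚ (cWeight (m + 1)) (m + 1) :=
    (mem_weightedHomogeneousSubmodule _ _ _ _).mpr (isWeightedHomogeneous_X ℚ _ _)
  have := (Ideal.IsHomogeneous.bot _).isWeaklyRegularModulo_concat_of_cons hXmem m.succ_pos hhom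
    hreg
  rw [isWeaklyRegularModulo_append, bot_sup_eq, ← sigmaIdeal_eq_ofList] at this
  exact ⟨this.1, this.2.1⟩

/-- Modulo the ideal, only the terms `i = 0` and `i = m + 1` of
`∑ (-1)^i c_i σ_{m+k+1-i} = 0` survive. -/
theorem mk_sigmaP_add (m k : ℕ) :
    mk (sigmaIdeal (m + 1) k) (sigmaP (m + 1) ((m + k + 1 : ℕ) : ℤ)) =
      (-1) ^ m * mk _ (X (Fin.last m)) * mk _ (sigmaP (m + 1) k) := by
  have h := congrArg (mk (sigmaIdeal (m + 1) k)) (sum_antidiagonal_cVar_sigmaP (m + 1) (m + k))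
  rw [map_sum, map_zero, Finset.sum_eq_add (0, m + k + 1) (m + 1, k) (by simp)] at h
  · rw [show ((m + 1 : ℕ) : ℤ) = (((Fin.last m : ℕ) + 1 : ℕ) : ℤ) from rfl, cVar_natCast_succ] at h
    simp only [pow_zero, Nat.cast_zero, cVar_zero, one_mul, map_mul, map_pow, map_neg,
      map_one] at h
    linear_combination h
  · rintro ⟨i, j⟩ hij hne
    rw [Finset.HasAntidiagonal.mem_antidiagonal] at hij
    rcases le_or_gt i m with hi | hi
    · rw [map_mul, eq_zero_iff_mem.mpr (sigmaP_mem_sigmaIdeal ?_ ?_), mul_zero]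
      all_goals
        have : i ≠ 0 := fun h => hne.1 (Prod.ext h (by simp only; omega))
        push_cast
        omega
    · have : i ≠ m + 1 := fun h => hne.2 (Prod.ext h (by simp only; omega))
      rw [cVar_of_lt (by push_cast; omega), mul_zero, zero_mul, map_zero]
  · exact fun h => absurd (Finset.HasAntidiagonal.mem_antidiagonal.mpr (by omega)) h
  · exact fun h => absurd (Finset.HasAntidiagonal.mem_antidiagonal.mpr (by omega)) h

/-- The case `(m + 1, k)` uses the cases `(m, k)` and, through the duality, `(k - 1, m + 1)`. -/
theorem isWeaklyRegularModulo_sigmaList (m k : ℕ) : IsWeaklyRegularModulo ⊥ (sigmaList m k m) := by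
  induction hN : m + k using Nat.strong_induction_on generalizing m k with
  | _ N ih =>
  rcases m with _ | m
  · trivial
  obtain ⟨hreg, hX⟩ := isWeaklyRegularModulo_sigmaList_succ (ih (m + k) (by omega) m k rfl)
  have hσ : mk (sigmaIdeal (m + 1) k) (sigmaP (m + 1) k) ∈ (_ ⧸ sigmaIdeal (m + 1) k)⁰ := by
    rcases k with _ | k
    · rw [Nat.cast_zero, sigmaP_zero, map_one]
      exact one_mem _
    · exact mk_sigmaP_mem_nonZeroDivisors_of_dual
        (isWeaklyRegularModulo_sigmaList_succ (ih (k + (m + 1)) (by omega) k (m + 1) rfl)).2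
  rw [sigmaList_succ, isWeaklyRegularModulo_append, bot_sup_eq, ← sigmaIdeal_eq_ofList]
  refine ⟨hreg, ?_, trivial⟩
  rw [show (k : ℤ) + 1 + m = ((m + k + 1 : ℕ) : ℤ) by push_cast; ring, mk_sigmaP_add]
  refine mul_mem (mul_mem ?_ hX) hσ
  exact ((isUnit_neg_one (α := _ ⧸ sigmaIdeal (m + 1) k)).pow m).mem_nonZeroDivisors

theorem mk_sigmaP_mem_nonZeroDivisors (m k : ℕ) :
    mk (sigmaIdeal (m + 1) k) (sigmaP (m + 1) ((m + 1 : ℕ) + k)) ∈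
      (_ ⧸ sigmaIdeal (m + 1) k)⁰ := by
  have h := isWeaklyRegularModulo_sigmaList (m + 1) k
  rw [sigmaList_succ, isWeaklyRegularModulo_append, bot_sup_eq, ← sigmaIdeal_eq_ofList] at h
  rw [show ((m + 1 : ℕ) : ℤ) + k = (k : ℤ) + 1 + m by push_cast; ring]
  exact h.2.1

end Regularity

theorem sigma_n_nonZeroDivisor_general (m k : ℕ) (hm : 0 < m) :
    Ideal.Quotient.mk
        (Ideal.span ((fun p : ℤ => sigmaP m p) '' Set.Icc ((k : ℤ) + 1) ((m : ℤ) + k - 1)))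
        (sigmaP m ((m : ℤ) + k)) ∈
      nonZeroDivisors (MvPolynomial (Fin m) ℚ ⧸
        Ideal.span ((fun p : ℤ => sigmaP m p) '' Set.Icc ((k : ℤ) + 1) ((m : ℤ) + k - 1))) := by
  obtain ⟨m, rfl⟩ := Nat.exists_eq_add_one_of_ne_zero hm.ne'
  exact mk_sigmaP_mem_nonZeroDivisors m k

/-- `σ_n` (with `n = m + k`) is a non-zero divisor in `S/⟨σ_{k+1}, …, σ_{n-1}⟩`. -/
theorem sigma_n_nonZeroDivisor (m k : ℕ) (hm : 0 < m) (hk : 0 < k) :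
    Ideal.Quotient.mk
        (Ideal.span ((fun p : ℤ => sigmaP m p) '' Set.Icc ((k : ℤ) + 1) ((m : ℤ) + k - 1)))
        (sigmaP m ((m : ℤ) + k)) ∈
      nonZeroDivisors (MvPolynomial (Fin m) ℚ ⧸
        Ideal.span ((fun p : ℤ => sigmaP m p) '' Set.Icc ((k : ℤ) + 1) ((m : ℤ) + k - 1))) :=
  sigma_n_nonZeroDivisor_general m k hm
end
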